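/- Let $\phi : \mathbb{R}^d \to \mathbb{R}$ be an integrable function with integrable Fourier transform such that $\phi \equiv 1$ on a neighborhood of a point $x_0 \ne 0$ (in particular $\phi(x_0) = \phi(0) = 1$). Then the Fourier transform $\hat\phi$ cannot be nonnegative everywhere. -/

import Mathlib

/-!
Fourier inversion writes `φ x = ∫ cos (2π ⟪ξ, x⟫) g ξ` with `g ≥ 0` the (real) Fourier transform.
Comparing `x = 0` with `x = x₀` gives `∫ (1 - cos (2π ⟪ξ, x₀⟫)) g ξ = 0`; the cosine equals `1`
only on countably many hyperplanes, a null set, so `g = 0` almost everywhere and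
`φ 0 = ∫ g = 0`, contradicting `φ 0 = 1`.
-/

open MeasureTheory Real Filter

noncomputable def ft {d : ℕ} (f : EuclideanSpace ℝ (Fin d) → ℂ)
    (ω : EuclideanSpace ℝ (Fin d)) : ℂ :=
  ∫ x, f x * Complex.exp (-Complex.I * ((inner ℝ x ω : ℝ) : ℂ))

open FourierTransform
open scoped InnerProductSpace

section Hyperplane

variable {V : Type*} [NormedAddCommGroup V] [NormedSpace ℝ V] [FiniteDimensional ℝ V]
  [MeasurableSpace V] [BorelSpace V] (μ : Measure V) [μ.IsAddHaarMeasure]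

theorem LinearMap.addHaar_preimage_singleton {L : V →ₗ[ℝ] ℝ} (hL : L ≠ 0) (t : ℝ) :
    μ (L ⁻¹' {t}) = 0 := by
  have hs : (affineSpan ℝ {t}).comap L.toAffineMap ≠ ⊤ := by
    intro htop
    have hconst (v : V) : L v = t := by
      have hv : v ∈ ((affineSpan ℝ {t}).comap L.toAffineMap : Set V) := by simp [htop]
      simpa [AffineSubspace.coe_affineSpan_singleton] using hv
    exact hL (LinearMap.ext fun v => by simp [hconst v, ← hconst 0])
  simpa using Measure.addHaar_affineSubspace μ _ hs

theorem LinearMap.ae_cos_ne_one {L : V →ₗ[ℝ] ℝ} (hL : L ≠ 0) : ∀ᵐ v ∂μ, cos (L v) ≠ 1 := by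
  have hnull : μ (⋃ n : ℤ, L ⁻¹' {n * (2 * π)}) = 0 :=
    measure_iUnion_null fun n => L.addHaar_preimage_singleton μ hL _
  refine measure_mono_null (fun v hv => ?_) hnull
  obtain ⟨n, hn⟩ := (cos_eq_one_iff _).1 (not_not.1 hv)
  exact Set.mem_iUnion.2 ⟨n, hn.symm⟩

end Hyperplane

theorem ae_eq_zero_of_integral_cos_mul_eq {α : Type*} [MeasurableSpace α] {μ : Measure α}
    {g θ : α → ℝ} (hg : Integrable g μ) (hg0 : 0 ≤ g) (hθ : AEStronglyMeasurable θ μ)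
    (hcos : ∀ᵐ a ∂μ, cos (θ a) ≠ 1) (h : ∫ a, cos (θ a) * g a ∂μ = ∫ a, g a ∂μ) :
    g =ᵐ[μ] 0 := by
  have hcosg : Integrable (fun a => cos (θ a) * g a) μ :=
    hg.bdd_mul (c := 1) (continuous_cos.comp_aestronglyMeasurable hθ)
      (.of_forall fun a => by simpa using abs_cos_le_one (θ a))
  have hint : ∫ a, (1 - cos (θ a)) * g a ∂μ = 0 := by
    simp only [sub_mul, one_mul]
    rw [integral_sub hg hcosg, h, sub_self]
  have hzero : (fun a => (1 - cos (θ a)) * g a) =ᵐ[μ] 0 :=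
    (integral_eq_zero_iff_of_nonneg
      (fun a => mul_nonneg (sub_nonneg.2 (cos_le_one (θ a))) (hg0 a))
      ((hg.sub hcosg).congr (.of_forall fun a => by simp only [Pi.sub_apply]; ring))).1 hint
  filter_upwards [hzero, hcos] with a ha hca
  exact (mul_eq_zero.1 ha).resolve_left (sub_ne_zero.2 (Ne.symm hca))

section Fourier

variable {V : Type*} [NormedAddCommGroup V] [InnerProductSpace ℝ V] [FiniteDimensional ℝ V]
  [MeasurableSpace V] [BorelSpace V]

theorem Continuous.eq_integral_cos_mul_fourier_re {φ : V → ℝ} (hφ : Continuous φ)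
    (hφi : Integrable φ) (hFi : Integrable (𝓕 fun x => (φ x : ℂ)))
    (hFim : ∀ ξ, (𝓕 (fun x => (φ x : ℂ)) ξ).im = 0) (x : V) :
    φ x = ∫ ξ, cos (2 * π * ⟪ξ, x⟫_ℝ) * (𝓕 (fun x => (φ x : ℂ)) ξ).re := by
  set F := 𝓕 fun x => (φ x : ℂ)
  have hinv : 𝓕⁻ F x = φ x :=
    congrFun ((Complex.continuous_ofReal.comp hφ).fourierInv_fourier_eq hφi.ofReal hFi) x
  have hint : Integrable fun ξ => Complex.exp (↑(2 * π * ⟪ξ, x⟫_ℝ) * Complex.I) • F ξ :=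
    hFi.bdd_mul (c := 1) (by fun_prop : Continuous _).aestronglyMeasurable
      (.of_forall fun ξ => (Complex.norm_exp_ofReal_mul_I _).le)
  calc φ x = (𝓕⁻ F x).re := by rw [hinv, Complex.ofReal_re]
    _ = ∫ ξ, (Complex.exp (↑(2 * π * ⟪ξ, x⟫_ℝ) * Complex.I) • F ξ).re := by
      rw [Real.fourierInv_eq']
      exact (integral_re hint).symm
    _ = ∫ ξ, cos (2 * π * ⟪ξ, x⟫_ℝ) * (F ξ).re := by
      simp only [smul_eq_mul, Complex.mul_re, Complex.exp_ofReal_mul_I_re, hFim, mul_zero,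
        sub_zero]

end Fourier

theorem ft_two_pi_smul {d : ℕ} (f : EuclideanSpace ℝ (Fin d) → ℂ)
    (ξ : EuclideanSpace ℝ (Fin d)) : ft f ((2 * π) • ξ) = 𝓕 f ξ := by
  rw [Real.fourier_eq', ft]
  congr 1
  ext v
  rw [smul_eq_mul, real_inner_smul_right]
  push_cast
  ring_nf

theorem integrable_fourier_of_integrable_ft {d : ℕ} {f : EuclideanSpace ℝ (Fin d) → ℂ}
    (hf : Integrable (ft f)) : Integrable (𝓕 f) := by
  simpa only [ft_two_pi_smul] using
    (integrable_comp_smul_iff volume (ft f) (by positivity : (2 * π : ℝ) ≠ 0)).2 hf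

theorem stmt1_general (d : ℕ) (φ : EuclideanSpace ℝ (Fin d) → ℝ)
    (x₀ : EuclideanSpace ℝ (Fin d)) (hx₀ : x₀ ≠ 0)
    (hcont : Continuous φ)
    (hint : Integrable φ)
    (hft_int : Integrable (ft (fun x => (φ x : ℂ))))
    (hnbhd : ∀ᶠ x in nhds x₀, φ x = 1)
    (h0 : φ 0 = 1) :
    ¬ (∀ ω, 0 ≤ (ft (fun x => (φ x : ℂ)) ω).re ∧ (ft (fun x => (φ x : ℂ)) ω).im = 0) := by
  intro hpos
  have hF (ξ) := ft_two_pi_smul (fun x => (φ x : ℂ)) ξ ▸ hpos ((2 * π) • ξ)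
  have hFi := integrable_fourier_of_integrable_ft hft_int
  have hinv := hcont.eq_integral_cos_mul_fourier_re hint hFi fun ξ => (hF ξ).2
  let L : EuclideanSpace ℝ (Fin d) →ₗ[ℝ] ℝ := (2 * π) • innerₛₗ ℝ x₀
  have hL : L ≠ 0 := by
    intro hL0
    simpa [L, pi_ne_zero, hx₀] using LinearMap.congr_fun hL0 x₀
  have hgi : Integrable fun ξ => (𝓕 (fun x => (φ x : ℂ)) ξ).re := hFi.re
  have hφ0 : φ 0 = ∫ ξ, (𝓕 (fun x => (φ x : ℂ)) ξ).re := by simpa using hinv 0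
  have hzero := ae_eq_zero_of_integral_cos_mul_eq hgi (fun ξ => (hF ξ).1)
    (θ := fun ξ => 2 * π * ⟪ξ, x₀⟫_ℝ) (by fun_prop)
    (by simpa [L, real_inner_comm] using L.ae_cos_ne_one volume hL)
    (by rw [← hinv x₀, hnbhd.self_of_nhds, ← h0, hφ0])
  rw [h0, integral_congr_ae hzero, Pi.zero_def, integral_zero] at hφ0
  exact one_ne_zero hφ0

/-- an integrable function with integrable Fourier transform which equals 1
on a neighborhood of some `x₀ ≠ 0` (and at `0`) cannot have an everywhere nonnegative
(real) Fourier transform. -/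
theorem stmt1 (d : ℕ) (hd : 0 < d) (φ : EuclideanSpace ℝ (Fin d) → ℝ)
    (x₀ : EuclideanSpace ℝ (Fin d)) (hx₀ : x₀ ≠ 0)
    (hcont : Continuous φ)
    (hint : Integrable φ)
    (hft_int : Integrable (ft (fun x => (φ x : ℂ))))
    (hnbhd : ∀ᶠ x in nhds x₀, φ x = 1)
    (h0 : φ 0 = 1) :
    ¬ (∀ ω, 0 ≤ (ft (fun x => (φ x : ℂ)) ω).re ∧ (ft (fun x => (φ x : ℂ)) ω).im = 0) :=
  stmt1_general d φ x₀ hx₀ hcont hint hft_int hnbhd h0
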